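/- Let K be a field, V a K-vector space, and Q : V → K a quadratic form whose polar form B is nondegenerate. Let m be an even natural number with m ≥ 2, and let U and U' be totally singular subspaces of V of dimension m that are opposite, i.e., U ∩ U'^⊥ = {0}. Then there exists a totally singular subspace U'' of dimension m contained in U + U' that is opposite both U and U': U'' ∩ U^⊥ = {0} and U'' ∩ U'^⊥ = {0}. (Inside the hyperbolic space U + U' of even Witt index m, any two opposite maximal totally singular subspaces admit a common opposite.) -/

import Mathlib

/-! The polar form identifies `U` with the dual of `U'`, since `U` and `U'` are opposite of the
same finite dimension. As `dim U'` is even, `U'` carries a nondegenerate alternating form, i.e. an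
isomorphism `β : U' ≃ U'^*` with `β w w = 0`. For `φ := β⁻¹ ∘ (U ≃ U'^*)` one gets
`B(u, φ u) = β (φ u) (φ u) = 0`, so the graph `{u + φ u | u ∈ U}` is totally singular. If
`u + φ u ⊥ U'` then `u ⊥ U'`, so `u = 0`; if `u + φ u ⊥ U` then `φ u ∈ U' ∩ U^⊥ = 0`, and `φ` is
injective. -/

/-- The perp of a subspace `S` with respect to the polar form of a quadratic form `Q`:
`S^⊥ = {v ∈ V | B(s,v) = 0 for all s ∈ S}`. -/
noncomputable def polarPerp {K V : Type*} [Field K] [AddCommGroup V] [Module K V]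
    (Q : QuadraticForm K V) (S : Submodule K V) : Submodule K V :=
  LinearMap.BilinForm.orthogonal (QuadraticMap.polarBilin Q) S

/-- A subspace is totally singular for `Q` if `Q` vanishes identically on it. -/
def IsTotallySingular {K V : Type*} [Field K] [AddCommGroup V] [Module K V]
    (Q : QuadraticForm K V) (S : Submodule K V) : Prop :=
  ∀ v ∈ S, Q v = 0

open Module QuadraticMap

section

variable {K : Type*} [Field K]

section Symplectic

variable (K) (X : Type*) [AddCommGroup X] [Module K X]

noncomputable def standardSymplecticForm : LinearMap.BilinForm K (X × Dual K X) :=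
  LinearMap.mk₂ K (fun p q => p.2 q.1 - q.2 p.1)
    (fun _ _ _ => by simp only [Prod.fst_add, Prod.snd_add, map_add, LinearMap.add_apply]; abel)
    (fun _ _ _ => by simp [mul_sub])
    (fun _ _ _ => by simp only [Prod.fst_add, Prod.snd_add, map_add, LinearMap.add_apply]; abel)
    (fun _ _ _ => by simp [mul_sub])

theorem standardSymplecticForm_apply (p q : X × Dual K X) :
    standardSymplecticForm K X p q = p.2 q.1 - q.2 p.1 :=
  LinearMap.mk₂_apply ..

theorem isAlt_standardSymplecticForm : (standardSymplecticForm K X).IsAlt :=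
  fun p => (standardSymplecticForm_apply K X p p).trans (sub_self _)

theorem injective_standardSymplecticForm : Function.Injective (standardSymplecticForm K X) := by
  refine (injective_iff_map_eq_zero _).mpr fun p hp => ?_
  have hp_apply (q : X × Dual K X) : p.2 q.1 - q.2 p.1 = 0 :=
    (standardSymplecticForm_apply K X p q).symm.trans (LinearMap.congr_fun hp q)
  have h₂ : p.2 = 0 := LinearMap.ext fun y => by simpa using hp_apply (y, 0)
  have h₁ : p.1 = 0 := (forall_dual_apply_eq_zero_iff K p.1).mp fun g => by
    simpa using hp_apply (0, g)
  exact Prod.ext h₁ h₂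

end Symplectic

theorem exists_linearEquiv_dual_isAlt_of_even_finrank {W : Type*} [AddCommGroup W] [Module K W]
    [FiniteDimensional K W] (h : Even (finrank K W)) :
    ∃ β : W ≃ₗ[K] Dual K W, ∀ w, β w w = 0 := by
  obtain ⟨k, hk⟩ := h
  let X := Fin k → K
  let e : W ≃ₗ[K] X × Dual K X := LinearEquiv.ofFinrankEq _ _ <| by
    rw [finrank_prod, Subspace.dual_finrank_eq, finrank_fin_fun, hk]
  let β : W →ₗ[K] Dual K W := (standardSymplecticForm K X).compl₁₂ e e
  have hβ : Function.Injective β := by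
    refine (injective_iff_map_eq_zero _).mpr fun w hw => e.map_eq_zero_iff.mp ?_
    refine injective_standardSymplecticForm K X (LinearMap.ext fun q => ?_)
    simpa [β] using LinearMap.congr_fun hw (e.symm q)
  refine ⟨β.linearEquivOfInjective hβ Subspace.dual_finrank_eq.symm, fun w => ?_⟩
  exact isAlt_standardSymplecticForm K X (e w)

variable {V : Type*} [AddCommGroup V] [Module K V] {Q : QuadraticForm K V}

theorem mem_polarPerp_iff {S : Submodule K V} {v : V} :
    v ∈ polarPerp Q S ↔ ∀ s ∈ S, polar Q s v = 0 :=
  Iff.rfl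

theorem IsTotallySingular.polar_eq_zero {S : Submodule K V} (hS : IsTotallySingular Q S)
    {x y : V} (hx : x ∈ S) (hy : y ∈ S) : polar Q x y = 0 := by
  rw [polar, hS _ (S.add_mem hx hy), hS _ hx, hS _ hy, sub_zero, sub_zero]

theorem IsTotallySingular.le_polarPerp {S : Submodule K V} (hS : IsTotallySingular Q S) :
    S ≤ polarPerp Q S :=
  fun _ hv _ hs => hS.polar_eq_zero hs hv

theorem IsTotallySingular.add_mem_polarPerp_iff {S : Submodule K V} (hS : IsTotallySingular Q S)
    {x y : V} (hx : x ∈ S) : x + y ∈ polarPerp Q S ↔ y ∈ polarPerp Q S :=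
  Submodule.add_mem_iff_right _ (hS.le_polarPerp hx)

variable {U U' : Submodule K V}

theorem inf_eq_bot_of_inf_polarPerp_eq_bot (hU' : IsTotallySingular Q U')
    (h : U ⊓ polarPerp Q U' = ⊥) : U ⊓ U' = ⊥ :=
  eq_bot_iff.mpr (h ▸ inf_le_inf_left U hU'.le_polarPerp)

theorem injective_polarBilin_domRestrict₁₂ (h : U ⊓ polarPerp Q U' = ⊥) :
    Function.Injective ((polarBilin Q).domRestrict₁₂ U U') := by
  refine (injective_iff_map_eq_zero _).mpr fun u hu => Subtype.ext ?_
  have hu_perp : (u : V) ∈ U ⊓ polarPerp Q U' := ⟨u.2, mem_polarPerp_iff.mpr fun s hs => by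
    rw [polar_comm]
    exact LinearMap.congr_fun hu ⟨s, hs⟩⟩
  rwa [h] at hu_perp

theorem inf_polarPerp_eq_bot_symm [FiniteDimensional K U] [FiniteDimensional K U']
    (hdim : finrank K U = finrank K U') (h : U ⊓ polarPerp Q U' = ⊥) :
    U' ⊓ polarPerp Q U = ⊥ := by
  have hsurj := (LinearMap.injective_iff_surjective_of_finrank_eq_finrank
    (hdim.trans Subspace.dual_finrank_eq.symm)).mp (injective_polarBilin_domRestrict₁₂ h)
  refine eq_bot_iff.mpr fun v ⟨hv, hv_perp⟩ => ?_
  have hdual : ∀ ξ : Dual K U', ξ ⟨v, hv⟩ = 0 := fun ξ => by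
    obtain ⟨u, rfl⟩ := hsurj ξ
    exact hv_perp u u.2
  exact congrArg Subtype.val ((forall_dual_apply_eq_zero_iff K _).mp hdual)

theorem exists_injective_polar_apply_eq_zero [FiniteDimensional K U] [FiniteDimensional K U']
    (hdim : finrank K U = finrank K U') (heven : Even (finrank K U'))
    (h : U ⊓ polarPerp Q U' = ⊥) :
    ∃ φ : U →ₗ[K] U', Function.Injective φ ∧ ∀ u : U, polar Q u (φ u) = 0 := by
  obtain ⟨β, hβ⟩ := exists_linearEquiv_dual_isAlt_of_even_finrank heven
  let χ : U ≃ₗ[K] Dual K U' := LinearMap.linearEquivOfInjective _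
    (injective_polarBilin_domRestrict₁₂ h) (hdim.trans Subspace.dual_finrank_eq.symm)
  refine ⟨(χ.trans β.symm).toLinearMap, (χ.trans β.symm).injective, fun u => ?_⟩
  have hχ : χ u = β (β.symm (χ u)) := (β.apply_symm_apply _).symm
  exact (LinearMap.congr_fun hχ (β.symm (χ u))).trans (hβ _)

section Graph

variable (φ : U →ₗ[K] U')

def addGraph : Submodule K V :=
  LinearMap.range (U.subtype + U'.subtype ∘ₗ φ)

theorem addGraph_le_sup : addGraph φ ≤ U ⊔ U' := by
  rintro _ ⟨u, rfl⟩
  exact Submodule.add_mem_sup u.2 (φ u).2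

theorem finrank_addGraph (h : U ⊓ U' = ⊥) : finrank K (addGraph φ) = finrank K U := by
  refine LinearMap.finrank_range_of_inj ((injective_iff_map_eq_zero _).mpr fun u hu => ?_)
  have hu' : (u : V) = -φ u := eq_neg_of_add_eq_zero_left hu
  have hmem : (u : V) ∈ U ⊓ U' := ⟨u.2, hu' ▸ U'.neg_mem (φ u).2⟩
  rw [h] at hmem
  exact Subtype.ext hmem

theorem isTotallySingular_addGraph (hU : IsTotallySingular Q U) (hU' : IsTotallySingular Q U')
    (hφ : ∀ u : U, polar Q u (φ u) = 0) : IsTotallySingular Q (addGraph φ) := by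
  rintro _ ⟨u, rfl⟩
  change Q (u + φ u) = 0
  rw [QuadraticMap.map_add Q, hU _ u.2, hU' _ (φ u).2, hφ, add_zero, add_zero]

theorem addGraph_inf_polarPerp_right_eq_bot (hU' : IsTotallySingular Q U')
    (h : U ⊓ polarPerp Q U' = ⊥) : addGraph φ ⊓ polarPerp Q U' = ⊥ := by
  refine eq_bot_iff.mpr ?_
  rintro _ ⟨⟨u, rfl⟩, hperp⟩
  change (u : V) + φ u ∈ polarPerp Q U' at hperp
  rw [add_comm, hU'.add_mem_polarPerp_iff (φ u).2] at hperp
  have hu : (u : V) ∈ U ⊓ polarPerp Q U' := ⟨u.2, hperp⟩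
  rw [h, Submodule.mem_bot, ZeroMemClass.coe_eq_zero] at hu
  simp [hu]

theorem addGraph_inf_polarPerp_left_eq_bot (hU : IsTotallySingular Q U)
    (hφ : Function.Injective φ) (h : U' ⊓ polarPerp Q U = ⊥) :
    addGraph φ ⊓ polarPerp Q U = ⊥ := by
  refine eq_bot_iff.mpr ?_
  rintro _ ⟨⟨u, rfl⟩, hperp⟩
  change (u : V) + φ u ∈ polarPerp Q U at hperp
  rw [hU.add_mem_polarPerp_iff u.2] at hperp
  have hφu : (φ u : V) ∈ U' ⊓ polarPerp Q U := ⟨(φ u).2, hperp⟩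
  rw [h, Submodule.mem_bot, ZeroMemClass.coe_eq_zero, ← map_zero φ] at hφu
  simp [hφ hφu]

end Graph

end

theorem common_opposite_in_hyperbolic_space_of_even_rank_general
    {K V : Type*} [Field K] [AddCommGroup V] [Module K V]
    (Q : QuadraticForm K V)
    (m : ℕ) (hm : 2 ≤ m) (hmeven : Even m)
    (U U' : Submodule K V)
    (hUts : IsTotallySingular Q U) (hU'ts : IsTotallySingular Q U')
    (hU : Module.finrank K U = m) (hU' : Module.finrank K U' = m)
    (hopp : U ⊓ polarPerp Q U' = ⊥) :
    ∃ U'' : Submodule K V,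
      U'' ≤ U ⊔ U' ∧
      Module.finrank K U'' = m ∧
      IsTotallySingular Q U'' ∧
      U'' ⊓ polarPerp Q U = ⊥ ∧
      U'' ⊓ polarPerp Q U' = ⊥ := by
  have : FiniteDimensional K U := .of_finrank_pos (by omega)
  have : FiniteDimensional K U' := .of_finrank_pos (by omega)
  have hdim : finrank K U = finrank K U' := hU.trans hU'.symm
  obtain ⟨φ, hφ_inj, hφ⟩ := exists_injective_polar_apply_eq_zero hdim (hU' ▸ hmeven) hopp
  exact ⟨addGraph φ, addGraph_le_sup φ,
    (finrank_addGraph φ (inf_eq_bot_of_inf_polarPerp_eq_bot hU'ts hopp)).trans hU,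
    isTotallySingular_addGraph φ hUts hU'ts hφ,
    addGraph_inf_polarPerp_left_eq_bot φ hUts hφ_inj (inf_polarPerp_eq_bot_symm hdim hopp),
    addGraph_inf_polarPerp_right_eq_bot φ hU'ts hopp⟩

/-- Let `Q` be a quadratic form with nondegenerate polar form and let
`U, U'` be opposite totally singular subspaces of even dimension `m ≥ 2`.  Then inside the
hyperbolic space `U + U'` there exists a totally singular subspace `U''` of dimension `m`
opposite both `U` and `U'`. -/
theorem common_opposite_in_hyperbolic_space_of_even_rank
    {K V : Type*} [Field K] [AddCommGroup V] [Module K V]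
    (Q : QuadraticForm K V)
    (hnd : ∀ v : V, (∀ w : V, QuadraticMap.polar (⇑Q) v w = 0) → v = 0)
    (m : ℕ) (hm : 2 ≤ m) (hmeven : Even m)
    (U U' : Submodule K V)
    (hUts : IsTotallySingular Q U) (hU'ts : IsTotallySingular Q U')
    (hU : Module.finrank K U = m) (hU' : Module.finrank K U' = m)
    (hopp : U ⊓ polarPerp Q U' = ⊥) :
    ∃ U'' : Submodule K V,
      U'' ≤ U ⊔ U' ∧
      Module.finrank K U'' = m ∧
      IsTotallySingular Q U'' ∧
      U'' ⊓ polarPerp Q U = ⊥ ∧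
      U'' ⊓ polarPerp Q U' = ⊥ :=
  common_opposite_in_hyperbolic_space_of_even_rank_general Q m hm hmeven U U' hUts hU'ts hU hU' hopp
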